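/- Let u be a bidirectional balanced infinite word over a finite alphabet A with letter frequencies ρ_a, and let positive lengths ℓ_a be chosen arbitrarily for a ∈ A. Then the geometric representation Λ_u = {x_n : n ∈ ℤ}, where x_n = Σ_a ℓ_a·(signed count of letter a in u between positions 0 and n), is bounded distance equivalent to the lattice ηℤ with η = Σ_{a∈A} ℓ_a ρ_a. -/

import Mathlib

/-!
Balance pins down letter counts in every factor: if `W` is a factor of length `k L`, then
cutting it into `k` blocks of length `L` shows that its `a`-count is within `k c` of `k` times
the `a`-count of any factor `w` of length `L`, while by the frequency hypothesis it is
`ρ_a k L + o(k L)`. Dividing by `k` gives `|w.count a - ρ_a L| ≤ c`. Applied to the factors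
between `0` and `n`, this gives `|x_n - η n| ≤ (∑ ℓ_a) c`. As `x_n` increases with steps
`ℓ_{u_n} ≥ min ℓ`, this forces `η > 0`, and then `x_n ↦ η n` is the required bijection.
-/

/-- `w` is a factor of the bidirectional infinite word `u : ℤ → A`. -/
def IsFactor {A : Type*} (u : ℤ → A) (w : List A) : Prop :=
  ∃ i : ℤ, w = (List.range w.length).map (fun k => u (i + k))

/-- The signed number of occurrences of the letter `a` in `u` between positions
`0` and `n`: the count in `u_0 ⋯ u_{n-1}` for `n ≥ 0`, minus the count in
`u_n ⋯ u_{-1}` for `n < 0` (the `a`-entry of the signed Parikh vector `P[n]`). -/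
def sCount {A : Type*} [DecidableEq A] (u : ℤ → A) (a : A) (n : ℤ) : ℤ :=
  if 0 ≤ n then (((List.range n.toNat).map (fun k => u k)).count a : ℤ)
  else -((((List.range (-n).toNat).map (fun k => u (n + k))).count a : ℤ))

/-- `Λ` is bounded distance equivalent to `L`. -/
def BDEquiv (Λ L : Set ℝ) : Prop :=
  ∃ C > 0, ∃ g : Λ → L, Function.Bijective g ∧ ∀ x : Λ, |(x : ℝ) - (g x : ℝ)| < C

/-- The one-dimensional lattice `ηℤ`. -/
def lat (η : ℝ) : Set ℝ := {x : ℝ | ∃ n : ℤ, x = η * n}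

theorem bdEquiv_of_injective {ι : Type*} {X Y : ι → ℝ} (hX : Function.Injective X)
    (hY : Function.Injective Y) {C : ℝ} (hC : ∀ n, |X n - Y n| ≤ C) :
    BDEquiv {x | ∃ n, x = X n} {y | ∃ n, y = Y n} := by
  let e (Z : ι → ℝ) (hZ : Function.Injective Z) : ι ≃ {z | ∃ n, z = Z n} :=
    Equiv.ofBijective (fun n => ⟨Z n, n, rfl⟩)
      ⟨fun m n h => hZ (congrArg Subtype.val h), fun ⟨_, n, hn⟩ => ⟨n, Subtype.ext hn.symm⟩⟩
  refine ⟨|C| + 1, by positivity, (e X hX).symm.trans (e Y hY), Equiv.bijective _, ?_⟩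
  intro x
  obtain ⟨n, rfl⟩ := (e X hX).surjective x
  simp only [Equiv.trans_apply, Equiv.symm_apply_apply]
  exact (hC n).trans_lt ((le_abs_self C).trans_lt (lt_add_one _))

theorem pos_of_forall_abs_sub_mul_le {X : ℕ → ℝ} {m η C : ℝ} (hm : 0 < m)
    (hX : ∀ n : ℕ, n * m ≤ X n) (hC : ∀ n : ℕ, |X n - η * n| ≤ C) : 0 < η := by
  by_contra! hη
  obtain ⟨n, hn⟩ := exists_nat_gt (C / m)
  have h1 : C < n * m := (div_lt_iff₀ hm).mp hn
  have h2 : η * n ≤ 0 := mul_nonpos_of_nonpos_of_nonneg hη n.cast_nonneg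
  linarith [hX n, (abs_le.mp (hC n)).2]

section Word

variable {A : Type*} (u : ℤ → A)

-- In `IsFactor` and `sCount`, `List.range n` is coerced to `List ℤ` by a `flatMap`;
-- `← List.map_eq_flatMap` brings those lists into this form.
def factor (i : ℤ) (L : ℕ) : List A := (List.range L).map fun k : ℕ => u (i + k)

@[simp]
theorem length_factor (i : ℤ) (L : ℕ) : (factor u i L).length = L := by
  simp [factor]

theorem isFactor_factor (i : ℤ) (L : ℕ) : IsFactor u (factor u i L) :=
  ⟨i, by simp [factor, ← List.map_eq_flatMap, Function.comp_def]⟩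

theorem factor_add (i : ℤ) (L L' : ℕ) :
    factor u i (L + L') = factor u i L ++ factor u (i + L) L' := by
  simp only [factor, List.range_add, List.map_append, List.map_map]
  congr 1
  refine List.map_congr_left fun k _ => ?_
  simp [add_assoc]

theorem factor_succ (i : ℤ) (L : ℕ) : factor u i (L + 1) = factor u i L ++ [u (i + L)] := by
  simp [factor, List.range_succ]

theorem factor_succ_eq_cons (i : ℤ) (L : ℕ) :
    factor u i (L + 1) = u i :: factor u (i + 1) L := by
  rw [add_comm, factor_add]
  simp [factor]

variable [DecidableEq A]

theorem sCount_of_nonneg {n : ℤ} (hn : 0 ≤ n) (a : A) :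
    sCount u a n = (factor u 0 n.toNat).count a := by
  simp [sCount, hn, factor, ← List.map_eq_flatMap, Function.comp_def]

theorem sCount_of_neg {n : ℤ} (hn : n < 0) (a : A) :
    sCount u a n = -((factor u n (-n).toNat).count a : ℤ) := by
  simp [sCount, hn.not_ge, factor, ← List.map_eq_flatMap, Function.comp_def]

theorem sCount_succ (a : A) (n : ℤ) :
    sCount u a (n + 1) = sCount u a n + [u n].count a := by
  rcases lt_or_ge n 0 with hn | hn
  · have hL : (-n).toNat = (-(n + 1)).toNat + 1 := by omega
    rw [sCount_of_neg u hn, hL, factor_succ_eq_cons, List.count_cons, ← List.count_singleton]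
    rcases (show n + 1 < 0 ∨ n + 1 = 0 by omega) with hn' | hn'
    · rw [sCount_of_neg u hn']
      push_cast; ring
    · simp [hn', sCount, factor]
  · have hL : (n + 1).toNat = n.toNat + 1 := by omega
    rw [sCount_of_nonneg u (by omega), sCount_of_nonneg u hn, hL, factor_succ,
      List.count_append, Int.toNat_of_nonneg hn, zero_add]
    push_cast; ring

theorem sCount_add_sub (a : A) (i : ℤ) (L : ℕ) :
    sCount u a (i + L) - sCount u a i = (factor u i L).count a := by
  induction L with
  | zero => simp [factor]
  | succ L ih =>
    rw [Nat.cast_succ, ← add_assoc, sCount_succ, factor_succ, List.count_append]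
    push_cast
    linarith

variable {u} {a : A} {c : ℝ}
  (hb : ∀ w v : List A, IsFactor u w → IsFactor u v → w.length = v.length →
    |(w.count a : ℝ) - v.count a| ≤ c)
include hb

theorem abs_count_factor_mul_sub_le (i j : ℤ) (L k : ℕ) :
    |((factor u j (k * L)).count a : ℝ) - k * (factor u i L).count a| ≤ k * c := by
  induction k generalizing j with
  | zero => simp [factor]
  | succ k ih =>
    have hblock := hb (factor u (j + (k * L : ℕ)) L) (factor u i L) (isFactor_factor u _ _)
      (isFactor_factor u _ _) (by simp)
    rw [add_mul, one_mul, factor_add, List.count_append]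
    push_cast
    calc _ = |(((factor u j (k * L)).count a : ℝ) - k * (factor u i L).count a)
            + ((factor u (j + (k * L : ℕ)) L).count a - (factor u i L).count a)| := by
          push_cast; ring_nf
      _ ≤ k * c + c := (abs_add_le _ _).trans (add_le_add (ih j) hblock)
      _ = (k + 1) * c := by ring

theorem abs_count_factor_sub_le {ρ : ℝ}
    (hfreq : ∀ ε : ℝ, 0 < ε → ∃ N : ℕ, ∀ w : List A, IsFactor u w →
      N ≤ w.length → |(w.count a : ℝ) / w.length - ρ| < ε)
    (i : ℤ) (L : ℕ) : |((factor u i L).count a : ℝ) - ρ * L| ≤ c := by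
  rcases Nat.eq_zero_or_pos L with rfl | hL
  · simpa [factor] using hb _ _ (isFactor_factor u i 0) (isFactor_factor u i 0) rfl
  have hL' : (0 : ℝ) < L := by exact_mod_cast hL
  refine le_of_forall_pos_le_add fun ε hε => ?_
  obtain ⟨N, hN⟩ := hfreq (ε / L) (div_pos hε hL')
  set k := N + 1
  have hk : (0 : ℝ) < k := by positivity
  set W := factor u 0 (k * L)
  have hkL : (0 : ℝ) < (k * L : ℕ) := by positivity
  have hfreqW : |(W.count a : ℝ) - ρ * (k * L : ℕ)| ≤ k * ε := by
    have hW := hN W (isFactor_factor u _ _) (by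
      rw [length_factor]; exact N.le_succ.trans (Nat.le_mul_of_pos_right k hL))
    rw [length_factor, div_sub' hkL.ne', abs_div, abs_of_pos hkL, div_lt_iff₀ hkL] at hW
    calc _ = |(W.count a : ℝ) - (k * L : ℕ) * ρ| := by ring_nf
      _ ≤ ε / L * (k * L : ℕ) := hW.le
      _ = k * ε := by push_cast; field_simp
  have key : k * |((factor u i L).count a : ℝ) - ρ * L| ≤ k * (c + ε) := by
    calc k * |((factor u i L).count a : ℝ) - ρ * L|
        = |(k * (factor u i L).count a - W.count a) + (W.count a - ρ * (k * L : ℕ))| := by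
          rw [← abs_of_pos hk, ← abs_mul, abs_of_pos hk]; push_cast; ring_nf
      _ ≤ k * c + k * ε := (abs_add_le _ _).trans <| add_le_add
          ((abs_sub_comm _ _).trans_le (abs_count_factor_mul_sub_le hb i 0 L k)) hfreqW
      _ = k * (c + ε) := by ring
  exact le_of_mul_le_mul_left key hk

theorem abs_sCount_sub_le {ρ : ℝ}
    (hfreq : ∀ ε : ℝ, 0 < ε → ∃ N : ℕ, ∀ w : List A, IsFactor u w →
      N ≤ w.length → |(w.count a : ℝ) / w.length - ρ| < ε)
    (n : ℤ) : |(sCount u a n : ℝ) - ρ * n| ≤ c := by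
  have hblock (i : ℤ) (L : ℕ) : |(sCount u a (i + L) : ℝ) - sCount u a i - ρ * L| ≤ c := by
    rw [← Int.cast_sub, sCount_add_sub, Int.cast_natCast]
    exact abs_count_factor_sub_le hb hfreq i L
  have hzero : sCount u a 0 = 0 := by simp [sCount]
  obtain ⟨m, rfl | rfl⟩ := Int.eq_nat_or_neg n
  · simpa [hzero] using hblock 0 m
  · have h := hblock (-m) m
    rw [neg_add_cancel, hzero, ← abs_neg] at h
    convert h using 2
    push_cast; ring

end Word

section GeometricRepresentation

variable {A : Type*} [Fintype A] [DecidableEq A]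

def geomPoint (ℓ : A → ℝ) (u : ℤ → A) (n : ℤ) : ℝ := ∑ a, ℓ a * (sCount u a n : ℝ)

variable {ℓ : A → ℝ} {u : ℤ → A}

theorem geomPoint_zero : geomPoint ℓ u 0 = 0 := by
  simp [geomPoint, sCount]

theorem geomPoint_succ (n : ℤ) : geomPoint ℓ u (n + 1) = geomPoint ℓ u n + ℓ (u n) := by
  simp [geomPoint, sCount_succ, List.count_singleton, mul_add, Finset.sum_add_distrib]

theorem geomPoint_strictMono (hℓ : ∀ a, 0 < ℓ a) : StrictMono (geomPoint ℓ u) :=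
  strictMono_int_of_lt_succ fun n => by
    rw [geomPoint_succ]
    exact lt_add_of_pos_right _ (hℓ _)

theorem nat_mul_le_geomPoint {m : ℝ} (hm : ∀ a, m ≤ ℓ a) (n : ℕ) :
    n * m ≤ geomPoint ℓ u n := by
  induction n with
  | zero => simp [geomPoint_zero]
  | succ n ih =>
    rw [Nat.cast_succ, Nat.cast_succ, geomPoint_succ, add_one_mul]
    exact add_le_add ih (hm _)

theorem abs_geomPoint_sub_le {ρ : A → ℝ} {c : ℝ} (hℓ : ∀ a, 0 ≤ ℓ a)
    (hdisc : ∀ a n, |(sCount u a n : ℝ) - ρ a * n| ≤ c) (n : ℤ) :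
    |geomPoint ℓ u n - (∑ a, ℓ a * ρ a) * n| ≤ (∑ a, ℓ a) * c := by
  calc |geomPoint ℓ u n - (∑ a, ℓ a * ρ a) * n|
      = |∑ a, ℓ a * ((sCount u a n : ℝ) - ρ a * n)| := by
        simp only [geomPoint, Finset.sum_mul, ← Finset.sum_sub_distrib, mul_sub, mul_assoc]
    _ ≤ ∑ a, ℓ a * c := by
        refine (Finset.abs_sum_le_sum_abs _ _).trans (Finset.sum_le_sum fun a _ => ?_)
        rw [abs_mul, abs_of_nonneg (hℓ a)]
        exact mul_le_mul_of_nonneg_left (hdisc a n) (hℓ a)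
    _ = (∑ a, ℓ a) * c := (Finset.sum_mul ..).symm

end GeometricRepresentation

/-- any geometric representation (with arbitrary positive lengths
`ℓ_a`) of a balanced bidirectional infinite word is bounded distance equivalent to
the lattice `ηℤ`, where `η = Σ_a ℓ_a ρ_a` and `ρ_a` are the letter frequencies. -/
theorem geometric_representation_of_balanced_is_bdl {A : Type*} [Fintype A]
    [DecidableEq A] (u : ℤ → A)
    (hbal : ∃ c : ℝ, 0 < c ∧ ∀ w v : List A, IsFactor u w → IsFactor u v →
      w.length = v.length → ∀ a : A, |(w.count a : ℝ) - (v.count a : ℝ)| ≤ c)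
    (ρ : A → ℝ)
    (hfreq : ∀ a : A, ∀ ε : ℝ, 0 < ε → ∃ N : ℕ, ∀ w : List A, IsFactor u w →
      N ≤ w.length → |(w.count a : ℝ) / (w.length : ℝ) - ρ a| < ε)
    (ℓ : A → ℝ) (hℓ : ∀ a, 0 < ℓ a) :
    BDEquiv {x : ℝ | ∃ n : ℤ, x = ∑ a : A, ℓ a * (sCount u a n : ℝ)}
      (lat (∑ a : A, ℓ a * ρ a)) := by
  obtain ⟨c, -, hb⟩ := hbal
  have hbound := abs_geomPoint_sub_le (fun a => (hℓ a).le)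
    (fun a => abs_sCount_sub_le (fun w v hw hv h => hb w v hw hv h a) (hfreq a))
  have : Nonempty A := ⟨u 0⟩
  obtain ⟨a₀, ha₀⟩ := Finite.exists_min ℓ
  have hη : 0 < ∑ a, ℓ a * ρ a :=
    pos_of_forall_abs_sub_mul_le (hℓ a₀) (nat_mul_le_geomPoint ha₀) (fun n => by
      simpa using hbound n)
  exact bdEquiv_of_injective (geomPoint_strictMono hℓ).injective
    (fun m n h => by exact_mod_cast mul_left_cancel₀ hη.ne' h) hbound
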